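/- Let r ≤ n, let N ∈ ℝ^{n×r}, let Λ_w be an r×r diagonal matrix with positive diagonal entries, and set Ξ = C^{-1/2} N Λ_w. Suppose Ξ = U Λ_ξ Vᵀ with U ∈ ℝ^{n×r}, V ∈ ℝ^{r×r} satisfying Uᵀ U = Vᵀ V = I_r and Λ_ξ = diag(ξ_1,…,ξ_r) with ξ_i ≥ 0 (a singular value decomposition of Ξ). Then a_* = Λ_σ^{-1} C^{-1/2} U Vᵀ satisfies a_*ᵀ Σ a_* = I_r and tr(a_*ᵀ Λ_σ N Λ_w) = Σ_{i=1}^r ξ_i. -/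

import Mathlib

/-!
Write `Q = C^{1/2}`, which is symmetric and invertible, so that `Σ = Λ_σ Q² Λ_σ`; `Λ_σ` is
invertible because `C = Λ_σ⁻¹ Σ Λ_σ⁻¹` is. Then `a_*ᵀ Σ a_* = V Uᵀ U Vᵀ = I`, and
`a_*ᵀ Λ_σ N Λ_w = V Uᵀ Ξ = V Λ_ξ Vᵀ`, whose trace is `tr Λ_ξ` by cyclicity since `Vᵀ V = I`.
-/

open Matrix BigOperators

/-- The positive semidefinite square root of a positive semidefinite matrix
(the definition `Matrix.PosSemidef.sqrt` of Mathlib, December 2024, since removed). -/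
noncomputable def Matrix.PosSemidef.sqrt {n : Type*} [Fintype n] [DecidableEq n] {𝕜 : Type*}
    [RCLike 𝕜] [PartialOrder 𝕜] {A : Matrix n n 𝕜} (hA : A.PosSemidef) : Matrix n n 𝕜 :=
  hA.1.eigenvectorUnitary.1 * diagonal ((↑) ∘ (Real.sqrt ∘ hA.1.eigenvalues)) *
  (star hA.1.eigenvectorUnitary : Matrix n n 𝕜)

namespace Matrix

section Sqrt

variable {m : Type*} [Fintype m] [DecidableEq m]

theorem PosSemidef.isHermitian_sqrt {𝕜 : Type*} [RCLike 𝕜] [PartialOrder 𝕜]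
    {A : Matrix m m 𝕜} (hA : A.PosSemidef) : hA.sqrt.IsHermitian := by
  simp only [IsHermitian, PosSemidef.sqrt, conjTranspose_mul, star_eq_conjTranspose,
    conjTranspose_conjTranspose, diagonal_conjTranspose, Matrix.mul_assoc]
  congr 3
  funext i
  simp

theorem PosSemidef.sqrt_mul_self {A : Matrix m m ℝ} (hA : A.PosSemidef) :
    hA.sqrt * hA.sqrt = A := by
  have hU := hA.1.eigenvectorUnitary.2
  rw [Unitary.mem_iff] at hU
  conv_rhs => rw [hA.1.spectral_theorem, Unitary.conjStarAlgAut_apply]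
  simp only [PosSemidef.sqrt, Matrix.mul_assoc]
  rw [← Matrix.mul_assoc (star _ : Matrix m m ℝ), hU.1, Matrix.one_mul,
    ← Matrix.mul_assoc (diagonal _), diagonal_mul_diagonal]
  congr 3
  funext i
  simp [Real.mul_self_sqrt (hA.eigenvalues_nonneg i)]

theorem PosDef.isUnit_det_sqrt {A : Matrix m m ℝ} (hA : A.PosDef) :
    IsUnit hA.posSemidef.sqrt.det := by
  have h := hA.isUnit
  rw [← hA.posSemidef.sqrt_mul_self, isUnit_iff_isUnit_det, det_mul] at h
  exact isUnit_of_mul_isUnit_left h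

end Sqrt

variable {R : Type*} [CommRing R] {m k : Type*} [Fintype m] [Fintype k]

theorem trace_mul_diagonal_mul_transpose [DecidableEq k] {V : Matrix m k R}
    (hV : Vᵀ * V = 1) (ξ : k → R) : (V * diagonal ξ * Vᵀ).trace = ∑ i, ξ i := by
  rw [Matrix.mul_assoc, trace_mul_comm, Matrix.mul_assoc, hV, Matrix.mul_one, trace_diagonal]

variable [DecidableEq m]

theorem isUnit_det_of_isUnit_det_inv_mul_mul_inv {L S : Matrix m m R}
    (h : IsUnit (L⁻¹ * S * L⁻¹).det) : IsUnit L.det := by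
  rw [det_mul, det_mul] at h
  exact isUnit_nonsing_inv_det_iff.mp (isUnit_of_mul_isUnit_right h)

/-- `U Vᵀ` is the polar factor of `Ξ = U Λ_ξ Vᵀ`; with `L = Λ_σ` and `Q = C^{1/2}` this is the
paper's `a_*`. -/
noncomputable def whitenedPolar (L Q : Matrix m m R) (U : Matrix m k R) (V : Matrix k k R) :
    Matrix m k R :=
  L⁻¹ * Q⁻¹ * U * Vᵀ

variable {L Q S : Matrix m m R} {U : Matrix m k R} {V : Matrix k k R}

theorem transpose_whitenedPolar (hL : Lᵀ = L) (hQ : Qᵀ = Q) :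
    (whitenedPolar L Q U V)ᵀ = V * Uᵀ * Q⁻¹ * L⁻¹ := by
  simp only [whitenedPolar, transpose_mul, transpose_transpose, transpose_nonsing_inv, hL, hQ,
    Matrix.mul_assoc]

theorem whitenedPolar_transpose_mul_mul_self [DecidableEq k] (hL : Lᵀ = L) (hQT : Qᵀ = Q)
    (hQ : IsUnit Q.det) (hQQ : Q * Q = L⁻¹ * S * L⁻¹) (hU : Uᵀ * U = 1) (hV : Vᵀ * V = 1) :
    (whitenedPolar L Q U V)ᵀ * S * whitenedPolar L Q U V = 1 := by
  rw [transpose_whitenedPolar hL hQT]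
  calc V * Uᵀ * Q⁻¹ * L⁻¹ * S * (L⁻¹ * Q⁻¹ * U * Vᵀ)
      = V * (Uᵀ * ((Q⁻¹ * Q) * (Q * Q⁻¹)) * U) * Vᵀ := by
        rw [Matrix.mul_assoc Q⁻¹, ← Matrix.mul_assoc Q, hQQ]
        simp only [Matrix.mul_assoc]
    _ = 1 := by
        rw [nonsing_inv_mul _ hQ, mul_nonsing_inv _ hQ, Matrix.mul_one, Matrix.mul_one, hU,
          Matrix.mul_one, mul_eq_one_comm.mp hV]

theorem trace_whitenedPolar_transpose_mul [DecidableEq k] {r : Type*} [Fintype r]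
    {N : Matrix m r R} {W : Matrix r k R} {ξ : k → R} (hL : Lᵀ = L) (hLdet : IsUnit L.det)
    (hQT : Qᵀ = Q) (hU : Uᵀ * U = 1) (hV : Vᵀ * V = 1)
    (hSVD : Q⁻¹ * N * W = U * diagonal ξ * Vᵀ) :
    ((whitenedPolar L Q U V)ᵀ * L * N * W).trace = ∑ i, ξ i := by
  rw [transpose_whitenedPolar hL hQT]
  calc (V * Uᵀ * Q⁻¹ * L⁻¹ * L * N * W).trace
      = (V * (Uᵀ * (Q⁻¹ * N * W))).trace := by
        rw [Matrix.mul_assoc (V * Uᵀ * Q⁻¹), nonsing_inv_mul _ hLdet, Matrix.mul_one]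
        simp only [Matrix.mul_assoc]
    _ = (V * diagonal ξ * Vᵀ).trace := by
        rw [hSVD, ← Matrix.mul_assoc Uᵀ, ← Matrix.mul_assoc Uᵀ, hU, Matrix.one_mul,
          Matrix.mul_assoc]
    _ = ∑ i, ξ i := trace_mul_diagonal_mul_transpose hV ξ

end Matrix

theorem stmt_8_general {n r : ℕ}
    (S : Matrix (Fin n) (Fin n) ℝ)
    (Ls : Matrix (Fin n) (Fin n) ℝ)
    (hLs : Ls = Matrix.diagonal (fun i => Real.sqrt (S i i)))
    (C : Matrix (Fin n) (Fin n) ℝ) (hC : C = Ls⁻¹ * S * Ls⁻¹)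
    (hCpd : C.PosDef)
    (N : Matrix (Fin n) (Fin r) ℝ)
    (Lw : Matrix (Fin r) (Fin r) ℝ)
    (Xi : Matrix (Fin n) (Fin r) ℝ)
    (hXi : Xi = (hCpd.posSemidef.sqrt)⁻¹ * N * Lw)
    (U : Matrix (Fin n) (Fin r) ℝ) (V : Matrix (Fin r) (Fin r) ℝ)
    (ξ : Fin r → ℝ)
    (hU : Uᵀ * U = 1) (hV : Vᵀ * V = 1)
    (hSVD : Xi = U * Matrix.diagonal ξ * Vᵀ)
    (astar : Matrix (Fin n) (Fin r) ℝ)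
    (hastar : astar = Ls⁻¹ * (hCpd.posSemidef.sqrt)⁻¹ * U * Vᵀ) :
    astarᵀ * S * astar = 1 ∧ (astarᵀ * Ls * N * Lw).trace = ∑ i, ξ i := by
  have hLsT : Lsᵀ = Ls := by rw [hLs, diagonal_transpose]
  have hLsdet : IsUnit Ls.det :=
    isUnit_det_of_isUnit_det_inv_mul_mul_inv (hC ▸ (isUnit_iff_isUnit_det _).mp hCpd.isUnit)
  have hQT : (hCpd.posSemidef.sqrt)ᵀ = hCpd.posSemidef.sqrt := by
    simpa only [conjTranspose_eq_transpose_of_trivial] using hCpd.posSemidef.isHermitian_sqrt.eq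
  subst hastar
  exact ⟨whitenedPolar_transpose_mul_mul_self hLsT hQT hCpd.isUnit_det_sqrt
      (hCpd.posSemidef.sqrt_mul_self.trans hC) hU hV,
    trace_whitenedPolar_transpose_mul hLsT hLsdet hQT hU hV (hXi ▸ hSVD)⟩

/-- **Proxy-VAR OASIS attainment.** With `Ξ = C^{-1/2} N Λ_w` and an SVD
`Ξ = U Λ_ξ Vᵀ` (`Uᵀ U = Vᵀ V = I_r`, `ξ_i ≥ 0`), the matrix
`a_* = Λ_σ⁻¹ C^{-1/2} U Vᵀ` satisfies `a_*ᵀ Σ a_* = I_r` and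
`tr(a_*ᵀ Λ_σ N Λ_w) = Σ_i ξ_i`. -/
theorem stmt_8 {n r : ℕ} (hr : r ≤ n)
    (S : Matrix (Fin n) (Fin n) ℝ) (hS : S.PosDef)
    (Ls : Matrix (Fin n) (Fin n) ℝ)
    (hLs : Ls = Matrix.diagonal (fun i => Real.sqrt (S i i)))
    (C : Matrix (Fin n) (Fin n) ℝ) (hC : C = Ls⁻¹ * S * Ls⁻¹)
    (hCpd : C.PosDef)
    (N : Matrix (Fin n) (Fin r) ℝ)
    (w : Fin r → ℝ) (hw : ∀ i, 0 < w i)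
    (Lw : Matrix (Fin r) (Fin r) ℝ) (hLw : Lw = Matrix.diagonal w)
    (Xi : Matrix (Fin n) (Fin r) ℝ)
    (hXi : Xi = (hCpd.posSemidef.sqrt)⁻¹ * N * Lw)
    (U : Matrix (Fin n) (Fin r) ℝ) (V : Matrix (Fin r) (Fin r) ℝ)
    (ξ : Fin r → ℝ) (hξ : ∀ i, 0 ≤ ξ i)
    (hU : Uᵀ * U = 1) (hV : Vᵀ * V = 1)
    (hSVD : Xi = U * Matrix.diagonal ξ * Vᵀ)
    (astar : Matrix (Fin n) (Fin r) ℝ)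
    (hastar : astar = Ls⁻¹ * (hCpd.posSemidef.sqrt)⁻¹ * U * Vᵀ) :
    astarᵀ * S * astar = 1 ∧ (astarᵀ * Ls * N * Lw).trace = ∑ i, ξ i :=
  stmt_8_general S Ls hLs C hC hCpd N Lw Xi hXi U V ξ hU hV hSVD astar hastar
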